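/- Let n ≥ 3 and 0 < r < R, define h_R(t) = (r^{2−n} − (tR)^{2−n})² and f_R(t) = (n−2)(tR)^{1−n}(r^{2−n} − (tR)^{2−n}) for t > r/R, and set Q₁(t) = f_R(t) h_R'(t) − f_R'(t) h_R(t), Q₂(t) = Q₁'(t), Q₃(t) = f_R(t) h_R(t). Then Q₁(1) > 0, Q₃(1) > 0, and (n−1)(Q₁(1) + Q₃(1)) + Q₂(1) > 0. -/

import Mathlib

/-!
Since `(tR)^m = R^m t^m`, away from `t = 0` both `f_R` and `h_R` are linear combinations of `1`
and two integer powers of `t`, so their values and first two derivatives at `1` are explicit, and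
`Q₂ = f_R h_R'' - f_R'' h_R`. With `c = r^{2-n} - R^{2-n} > 0`, `x = R^{2-n}`, `P = R^{1-n}` and
`k = n - 2` this gives `Q₁(1) = kPc²((n-1)c + kx)`, `Q₃(1) = kPc³` and
`(n-1)(Q₁(1) + Q₃(1)) + Q₂(1) = 2k²Pxc((n-1)c + kx)`, all positive because `c > 0`.
-/

noncomputable section

/-- `h_R(t) = (r^{2-n} - (tR)^{2-n})²` (dimension `n ≥ 3`). -/
def hN (n : ℕ) (r R t : ℝ) : ℝ := (r ^ (2 - (n : ℤ)) - (t * R) ^ (2 - (n : ℤ))) ^ 2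

/-- `f_R(t) = (n-2)(tR)^{1-n}(r^{2-n} - (tR)^{2-n})` (dimension `n ≥ 3`). -/
def fN (n : ℕ) (r R t : ℝ) : ℝ :=
  ((n : ℝ) - 2) * (t * R) ^ (1 - (n : ℤ)) * (r ^ (2 - (n : ℤ)) - (t * R) ^ (2 - (n : ℤ)))

/-- `Q₁ = f_R h_R' - f_R' h_R`. -/
def Q1 (n : ℕ) (r R t : ℝ) : ℝ :=
  fN n r R t * deriv (hN n r R) t - deriv (fN n r R) t * hN n r R t

/-- `Q₂ = Q₁'`. -/
def Q2 (n : ℕ) (r R t : ℝ) : ℝ := deriv (Q1 n r R) t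

/-- `Q₃ = f_R h_R`. -/
def Q3 (n : ℕ) (r R t : ℝ) : ℝ := fN n r R t * hN n r R t

open Filter Topology

theorem zpow_lt_zpow_left_of_neg {a b : ℝ} {m : ℤ} (ha : 0 < a) (hab : a < b) (hm : m < 0) :
    b ^ m < a ^ m := by
  have := zpow_lt_zpow_left₀ (neg_pos.mpr hm) (inv_nonneg.mpr (ha.trans hab).le)
    (inv_strictAnti₀ ha hab)
  rwa [inv_zpow', inv_zpow', neg_neg] at this

theorem hasDerivAt_mul_deriv_sub_deriv_mul {f h : ℝ → ℝ} {x f' h' f'' h'' : ℝ}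
    (hf : HasDerivAt f f' x) (hh : HasDerivAt h h' x)
    (hf' : HasDerivAt (deriv f) f'' x) (hh' : HasDerivAt (deriv h) h'' x) :
    HasDerivAt (fun t => f t * deriv h t - deriv f t * h t) (f x * h'' - f'' * h x) x := by
  refine ((hf.mul hh').sub (hf'.mul hh)).congr_deriv ?_
  rw [hf.deriv, hh.deriv]
  ring

section ZpowTrinomial

variable (γ α β : ℝ) (i j : ℤ)

theorem hasDerivAt_const_add_zpow_add_zpow {t : ℝ} (ht : t ≠ 0) :
    HasDerivAt (fun t : ℝ => γ + α * t ^ i + β * t ^ j)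
      (α * (i * t ^ (i - 1)) + β * (j * t ^ (j - 1))) t :=
  (((hasDerivAt_zpow i t (.inl ht)).const_mul α).const_add γ).add
    ((hasDerivAt_zpow j t (.inl ht)).const_mul β)

theorem hasDerivAt_deriv_const_add_zpow_add_zpow {t : ℝ} (ht : t ≠ 0) :
    HasDerivAt (deriv fun t : ℝ => γ + α * t ^ i + β * t ^ j)
      (α * i * (i - 1) * t ^ (i - 2) + β * j * (j - 1) * t ^ (j - 2)) t := by
  have hderiv : (deriv fun t : ℝ => γ + α * t ^ i + β * t ^ j) =ᶠ[𝓝 t]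
      fun t => α * (i * t ^ (i - 1)) + β * (j * t ^ (j - 1)) := by
    filter_upwards [eventually_ne_nhds ht] with s hs
    exact (hasDerivAt_const_add_zpow_add_zpow γ α β i j hs).deriv
  have hsecond := (((hasDerivAt_zpow (i - 1) t (.inl ht)).const_mul (i : ℝ)).const_mul α).add
    (((hasDerivAt_zpow (j - 1) t (.inl ht)).const_mul (j : ℝ)).const_mul β)
  rw [show i - 1 - 1 = i - 2 by ring, show j - 1 - 1 = j - 2 by ring] at hsecond
  refine (hsecond.congr_deriv ?_).congr_of_eventuallyEq hderiv
  push_cast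
  ring

theorem jet_one_of_eventuallyEq_const_add_zpow_add_zpow {f : ℝ → ℝ}
    (hf : f =ᶠ[𝓝 1] fun t => γ + α * t ^ i + β * t ^ j) :
    f 1 = γ + α + β ∧ HasDerivAt f (α * i + β * j) 1 ∧
      HasDerivAt (deriv f) (α * i * (i - 1) + β * j * (j - 1)) 1 := by
  refine ⟨by simpa using hf.eq_of_nhds, ?_, ?_⟩
  · refine ((hasDerivAt_const_add_zpow_add_zpow γ α β i j one_ne_zero).congr_of_eventuallyEq
      hf).congr_deriv ?_
    simp
  · refine ((hasDerivAt_deriv_const_add_zpow_add_zpow γ α β i j one_ne_zero)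
      |>.congr_of_eventuallyEq hf.deriv).congr_deriv ?_
    simp

end ZpowTrinomial

section ShellJets

variable (n : ℕ) (r R : ℝ)

theorem fN_eventuallyEq_one : fN n r R =ᶠ[𝓝 1] fun t =>
    0 + ((n : ℝ) - 2) * R ^ (1 - (n : ℤ)) * r ^ (2 - (n : ℤ)) * t ^ (1 - (n : ℤ)) +
      -(((n : ℝ) - 2) * R ^ (1 - (n : ℤ)) * R ^ (2 - (n : ℤ))) * t ^ (3 - 2 * (n : ℤ)) := by
  filter_upwards [eventually_ne_nhds one_ne_zero] with t ht
  rw [fN, mul_zpow, mul_zpow, show 3 - 2 * (n : ℤ) = (1 - n) + (2 - n) by ring, zpow_add₀ ht]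
  ring

theorem hN_eventuallyEq_one : hN n r R =ᶠ[𝓝 1] fun t =>
    (r ^ (2 - (n : ℤ))) ^ 2 +
      -(2 * r ^ (2 - (n : ℤ)) * R ^ (2 - (n : ℤ))) * t ^ (2 - (n : ℤ)) +
      (R ^ (2 - (n : ℤ))) ^ 2 * t ^ (4 - 2 * (n : ℤ)) := by
  filter_upwards [eventually_ne_nhds one_ne_zero] with t ht
  rw [hN, mul_zpow, show 4 - 2 * (n : ℤ) = (2 - n) + (2 - n) by ring, zpow_add₀ ht]
  ring

theorem Q1_one_eq : Q1 n r R 1 = ((n : ℝ) - 2) * R ^ (1 - (n : ℤ)) *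
    (r ^ (2 - (n : ℤ)) - R ^ (2 - (n : ℤ))) ^ 2 *
      (((n : ℝ) - 1) * (r ^ (2 - (n : ℤ)) - R ^ (2 - (n : ℤ))) +
        ((n : ℝ) - 2) * R ^ (2 - (n : ℤ))) := by
  obtain ⟨hf0, hf1, -⟩ :=
    jet_one_of_eventuallyEq_const_add_zpow_add_zpow _ _ _ _ _ (fN_eventuallyEq_one n r R)
  obtain ⟨hh0, hh1, -⟩ :=
    jet_one_of_eventuallyEq_const_add_zpow_add_zpow _ _ _ _ _ (hN_eventuallyEq_one n r R)
  rw [Q1, hf1.deriv, hh1.deriv, hf0, hh0]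
  push_cast
  ring

theorem Q2_one_eq : Q2 n r R 1 = ((n : ℝ) - 2) * R ^ (1 - (n : ℤ)) *
    (r ^ (2 - (n : ℤ)) - R ^ (2 - (n : ℤ))) *
      (2 * ((n : ℝ) - 2) ^ 2 * (R ^ (2 - (n : ℤ))) ^ 2 +
        ((n : ℝ) - 2) * ((n : ℝ) - 1) * R ^ (2 - (n : ℤ)) *
          (r ^ (2 - (n : ℤ)) - R ^ (2 - (n : ℤ))) -
        n * ((n : ℝ) - 1) * (r ^ (2 - (n : ℤ)) - R ^ (2 - (n : ℤ))) ^ 2) := by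
  obtain ⟨hf0, hf1, hf2⟩ :=
    jet_one_of_eventuallyEq_const_add_zpow_add_zpow _ _ _ _ _ (fN_eventuallyEq_one n r R)
  obtain ⟨hh0, hh1, hh2⟩ :=
    jet_one_of_eventuallyEq_const_add_zpow_add_zpow _ _ _ _ _ (hN_eventuallyEq_one n r R)
  have hQ1 : HasDerivAt (Q1 n r R) _ 1 := hasDerivAt_mul_deriv_sub_deriv_mul hf1 hh1 hf2 hh2
  rw [Q2, hQ1.deriv, hf0, hh0]
  push_cast
  ring

theorem Q3_one_eq : Q3 n r R 1 = ((n : ℝ) - 2) * R ^ (1 - (n : ℤ)) *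
    (r ^ (2 - (n : ℤ)) - R ^ (2 - (n : ℤ))) ^ 3 := by
  rw [Q3, fN, hN, one_mul]
  ring

end ShellJets

/-- positivity of the coefficients in the key estimate, `n ≥ 3`.
Let `n ≥ 3` and `0 < r < R`.  Then `Q₁(1) > 0`, `Q₃(1) > 0` and
`(n-1)(Q₁(1) + Q₃(1)) + Q₂(1) > 0`. -/
theorem shell_coefficients_positive_dim_ge_three (n : ℕ) (hn : 3 ≤ n) (r R : ℝ)
    (hr : 0 < r) (hrR : r < R) :
    0 < Q1 n r R 1 ∧ 0 < Q3 n r R 1 ∧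
      0 < ((n : ℝ) - 1) * (Q1 n r R 1 + Q3 n r R 1) + Q2 n r R 1 := by
  rw [Q1_one_eq, Q2_one_eq, Q3_one_eq]
  have hR : 0 < R := hr.trans hrR
  have hk : (0 : ℝ) < n - 2 := by
    have : (3 : ℝ) ≤ n := by exact_mod_cast hn
    linarith
  have hn1 : (0 : ℝ) < n - 1 := by linarith
  have hc : 0 < r ^ (2 - (n : ℤ)) - R ^ (2 - (n : ℤ)) :=
    sub_pos.mpr (zpow_lt_zpow_left_of_neg hr hrR (by omega))
  set c := r ^ (2 - (n : ℤ)) - R ^ (2 - (n : ℤ))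
  set k := (n : ℝ) - 2
  have hx : 0 < R ^ (2 - (n : ℤ)) := zpow_pos hR _
  have hP : 0 < R ^ (1 - (n : ℤ)) := zpow_pos hR _
  refine ⟨by positivity, by positivity, ?_⟩
  calc 0 < 2 * k ^ 2 * R ^ (1 - (n : ℤ)) * R ^ (2 - (n : ℤ)) * c *
        (((n : ℝ) - 1) * c + k * R ^ (2 - (n : ℤ))) := by positivity
    _ = _ := by ring
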